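/- If there exists a principle dilation system (π, S, T, W) of a finite-dimensional linear system (φ, A, V) with dim W = (dim A)(dim V), then every linearly minimal dilation system of (φ, A, V) is irreducible (hence principle). -/
import Mathlib


open scoped TensorProduct

variable (k : Type*) [Field k] (A : Type*) [Ring A] [Algebra k A]
  (V : Type*) [AddCommGroup V] [Module k V]

/-- if a finite-dimensional linear system `(φ, A, V)` admits a principle
dilation system `(π, S, T, W)` with `dim W = (dim A)(dim V)`, then every linearly
minimal dilation system of `(φ, A, V)` is irreducible (hence principle). -/
theorem all_minimal_dilations_irreducible_of_maximal_principle
    [FiniteDimensional k A] [FiniteDimensional k V]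
    (φ : A →ₗ[k] Module.End k V) (hφ : φ 1 = 1)
    (W : Type*) [AddCommGroup W] [Module k W]
    (π : A →ₐ[k] Module.End k W) (T : V →ₗ[k] W) (S : W →ₗ[k] V)
    (hT : Function.Injective T) (hS : Function.Surjective S)
    (hdil : ∀ a : A, (φ a : V →ₗ[k] V) = S ∘ₗ (π a : W →ₗ[k] W) ∘ₗ T)
    (hmin : Submodule.span k {w : W | ∃ (a : A) (x : V), w = π a (T x)} = ⊤)
    (hirr : ∀ K : Submodule k W, (∀ a : A, K.map (π a : W →ₗ[k] W) ≤ K) →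
      K ≤ LinearMap.ker S → K = ⊥)
    (hdim : Module.finrank k W = Module.finrank k A * Module.finrank k V)
    (W₁ : Type*) [AddCommGroup W₁] [Module k W₁]
    (π₁ : A →ₐ[k] Module.End k W₁) (T₁ : V →ₗ[k] W₁) (S₁ : W₁ →ₗ[k] V)
    (hT₁ : Function.Injective T₁) (hS₁ : Function.Surjective S₁)
    (hdil₁ : ∀ a : A, (φ a : V →ₗ[k] V) = S₁ ∘ₗ (π₁ a : W₁ →ₗ[k] W₁) ∘ₗ T₁)
    (hmin₁ : Submodule.span k {w : W₁ | ∃ (a : A) (x : V), w = π₁ a (T₁ x)} = ⊤) :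
    ∀ K : Submodule k W₁, (∀ a : A, K.map (π₁ a : W₁ →ₗ[k] W₁) ≤ K) →
      K ≤ LinearMap.ker S₁ → K = ⊥ := by
  intro K hKinv hKker
  -- the canonical surjections from A ⊗ V
  let B₁ : A →ₗ[k] V →ₗ[k] W₁ :=
    { toFun := fun a => ((π₁ a : Module.End k W₁) : W₁ →ₗ[k] W₁) ∘ₗ T₁
      map_add' := by intro a b; ext x; simp
      map_smul' := by intro c a; ext x; simp }
  let Ψ₁ : A ⊗[k] V →ₗ[k] W₁ := TensorProduct.lift B₁
  let B₀ : A →ₗ[k] V →ₗ[k] W :=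
    { toFun := fun a => ((π a : Module.End k W) : W →ₗ[k] W) ∘ₗ T
      map_add' := by intro a b; ext x; simp
      map_smul' := by intro c a; ext x; simp }
  let Ψ₀ : A ⊗[k] V →ₗ[k] W := TensorProduct.lift B₀
  have hΨ₁tmul : ∀ (a : A) (x : V), Ψ₁ (a ⊗ₜ x) = π₁ a (T₁ x) := fun a x => rfl
  have hΨ₀tmul : ∀ (a : A) (x : V), Ψ₀ (a ⊗ₜ x) = π a (T x) := fun a x => rfl
  have hΨ₁surj : Function.Surjective Ψ₁ := by
    rw [← LinearMap.range_eq_top, ← top_le_iff, ← hmin₁, Submodule.span_le]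
    rintro w ⟨a, x, rfl⟩
    exact ⟨a ⊗ₜ x, rfl⟩
  have hΨ₀surj : Function.Surjective Ψ₀ := by
    rw [← LinearMap.range_eq_top, ← top_le_iff, ← hmin, Submodule.span_le]
    rintro w ⟨a, x, rfl⟩
    exact ⟨a ⊗ₜ x, rfl⟩
  have hΨ₀inj : Function.Injective Ψ₀ := by
    have : FiniteDimensional k W := Module.Finite.of_surjective Ψ₀ hΨ₀surj
    have h : Module.finrank k (A ⊗[k] V) = Module.finrank k W := by
      rw [Module.finrank_tensorProduct, hdim]
    exact (LinearMap.injective_iff_surjective_of_finrank_eq_finrank h).mpr hΨ₀surj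
  -- the A-action on A ⊗ V
  let ρ : A → (A ⊗[k] V →ₗ[k] A ⊗[k] V) := fun b =>
    LinearMap.rTensor V (LinearMap.mulLeft k b)
  have hinter₁ : ∀ (b : A) (u : A ⊗[k] V), Ψ₁ (ρ b u) = π₁ b (Ψ₁ u) := by
    intro b u
    induction u using TensorProduct.induction_on with
    | zero => simp
    | tmul a x =>
        simp only [ρ, LinearMap.rTensor_tmul, LinearMap.mulLeft_apply, hΨ₁tmul]
        rw [map_mul]; rfl
    | add u v hu hv => simp [map_add, hu, hv]
  have hinter₀ : ∀ (b : A) (u : A ⊗[k] V), Ψ₀ (ρ b u) = π b (Ψ₀ u) := by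
    intro b u
    induction u using TensorProduct.induction_on with
    | zero => simp
    | tmul a x =>
        simp only [ρ, LinearMap.rTensor_tmul, LinearMap.mulLeft_apply, hΨ₀tmul]
        rw [map_mul]; rfl
    | add u v hu hv => simp [map_add, hu, hv]
  have hSΨ : ∀ u : A ⊗[k] V, S (Ψ₀ u) = S₁ (Ψ₁ u) := by
    intro u
    induction u using TensorProduct.induction_on with
    | zero => simp
    | tmul a x =>
        rw [hΨ₀tmul, hΨ₁tmul]
        have h0 := congrArg (fun f : V →ₗ[k] V => f x) (hdil a)
        have h1 := congrArg (fun f : V →ₗ[k] V => f x) (hdil₁ a)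
        simp only [LinearMap.comp_apply] at h0 h1
        rw [← h0, ← h1]
    | add u v hu hv => simp [map_add, hu, hv]
  -- transport K to W
  set P : Submodule k (A ⊗[k] V) := K.comap Ψ₁ with hP
  have hK' : P.map Ψ₀ = ⊥ := by
    apply hirr
    · intro b w hw
      rcases hw with ⟨w', hw', rfl⟩
      rcases hw' with ⟨u, hu, rfl⟩
      refine ⟨ρ b u, ?_, hinter₀ b u⟩
      show Ψ₁ (ρ b u) ∈ K
      rw [hinter₁]
      exact hKinv b ⟨Ψ₁ u, hu, rfl⟩
    · rintro w ⟨u, hu, rfl⟩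
      have : S₁ (Ψ₁ u) = 0 := hKker hu
      simp [LinearMap.mem_ker, hSΨ u, this]
  have hPbot : P = ⊥ := by
    rw [eq_bot_iff]
    intro u hu
    have h0 : Ψ₀ u = 0 := by
      have : Ψ₀ u ∈ (⊥ : Submodule k W) := hK' ▸ Submodule.mem_map_of_mem hu
      simpa using this
    have : u = 0 := hΨ₀inj (by rw [h0, map_zero])
    simp [this]
  rw [← Submodule.map_comap_eq_of_surjective hΨ₁surj K, ← hP, hPbot, Submodule.map_bot]
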